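/- arXiv:2510.09863 — 12 statements merged into one kernel-verified Lean document; each statement's English description precedes it below -/
import Mathlib

section
/- For a 2-absorbing submodule F of M and an element r ∈ R with r ∉ (F :_R M), the submodule (F :_M r) = {m ∈ M : r·m ∈ F} is a 2-absorbing submodule of M containing F. -/
/-- A proper submodule `F` of `M` is 2-absorbing if whenever `a, b ∈ R`, `m ∈ M` and
`a • b • m ∈ F`, then `a * b ∈ (F :_R M)`, or `a • m ∈ F`, or `b • m ∈ F`. -/
def IsTwoAbsorbing {R M : Type*} [CommRing R] [AddCommGroup M] [Module R M]
    (F : Submodule R M) : Prop :=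
  F ≠ ⊤ ∧ ∀ a b : R, ∀ m : M, a • b • m ∈ F →
    a * b ∈ F.colon ⊤ ∨ a • m ∈ F ∨ b • m ∈ F

/-- If `F` is a 2-absorbing submodule of `M` and `r ∈ R` with `r ∉ (F :_R M)`, then
`(F :_M r) = {m : M | r • m ∈ F}` is a 2-absorbing submodule of `M` containing `F`. -/
theorem colon_elem_isTwoAbsorbing {R M : Type*} [CommRing R] [AddCommGroup M] [Module R M]
    (F : Submodule R M) (hF : IsTwoAbsorbing F) (r : R) (hr : r ∉ F.colon ⊤) :
    IsTwoAbsorbing (Submodule.comap (LinearMap.lsmul R M r) F) ∧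
      F ≤ Submodule.comap (LinearMap.lsmul R M r) F := by
  have hmem : ∀ m : M, m ∈ Submodule.comap (LinearMap.lsmul R M r) F ↔ r • m ∈ F := by
    intro m; rfl
  refine ⟨⟨?_, ?_⟩, ?_⟩
  · intro h
    apply hr
    rw [Submodule.mem_colon]
    intro p _
    have : p ∈ Submodule.comap (LinearMap.lsmul R M r) F := h ▸ Submodule.mem_top
    exact (hmem p).mp this
  · intro a b m hab
    have h1 : a • b • (r • m) ∈ F := by
      have := (hmem _).mp hab
      rw [smul_comm r a, smul_comm r b] at this
      exact this
    rcases hF.2 a b (r • m) h1 with h | h | h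
    · left
      rw [Submodule.mem_colon] at h ⊢
      intro p _
      rw [hmem, smul_comm]
      exact h (r • p) (Submodule.mem_top (R := R))
    · right; left
      rw [hmem, smul_comm]
      exact h
    · right; right
      rw [hmem, smul_comm]
      exact h
  · intro m hm
    exact (hmem m).mpr (F.smul_mem r hm)
end

section
/- The intersection of a nonempty chain of 2-absorbing submodules of M is a 2-absorbing submodule of M. -/
/-- The intersection of a nonempty chain of 2-absorbing submodules of `M` is a
2-absorbing submodule of `M`. -/
theorem iInf_chain_isTwoAbsorbing {R M ι : Type*} [CommRing R] [AddCommGroup M] [Module R M]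
    [Nonempty ι] (F : ι → Submodule R M)
    (hchain : ∀ i j : ι, F i ≤ F j ∨ F j ≤ F i)
    (habs : ∀ i : ι, IsTwoAbsorbing (F i)) :
    IsTwoAbsorbing (⨅ i, F i) := by
  constructor
  · intro h
    obtain ⟨i⟩ := ‹Nonempty ι›
    exact (habs i).1 (top_le_iff.mp (h ▸ iInf_le F i))
  · intro a b m hm
    by_contra hcon
    push_neg at hcon
    obtain ⟨h1, h2, h3⟩ := hcon
    rw [Submodule.mem_colon] at h1
    push_neg at h1
    obtain ⟨x, -, hx⟩ := h1
    simp only [Submodule.mem_iInf, not_forall] at h2 h3 hx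
    obtain ⟨i, hi⟩ := h2
    obtain ⟨j, hj⟩ := h3
    obtain ⟨k, hk⟩ := hx
    obtain ⟨l, li, lj, lk⟩ : ∃ l, F l ≤ F i ∧ F l ≤ F j ∧ F l ≤ F k := by
      rcases hchain i j with h | h
      · rcases hchain i k with h' | h'
        · exact ⟨i, le_refl _, h, h'⟩
        · exact ⟨k, h', h'.trans h, le_refl _⟩
      · rcases hchain j k with h' | h'
        · exact ⟨j, h, le_refl _, h'⟩
        · exact ⟨k, h'.trans h, h', le_refl _⟩
    have hml : a • b • m ∈ F l := (Submodule.mem_iInf F).mp hm l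
    rcases (habs l).2 a b m hml with hc | hc | hc
    · exact hk (lk (Submodule.mem_colon.mp hc x trivial))
    · exact hi (li hc)
    · exact hj (lj hc)
end

section
/- If M is a finitely generated R-module and {F_i}_{i ∈ Δ} is a nonempty chain of 2-absorbing submodules of M, then the union ⋃_{i ∈ Δ} F_i is a 2-absorbing submodule of M. -/
/-- If `M` is finitely generated and `{F_i}` is a nonempty chain of 2-absorbing submodules,
then the union `⋃ F_i` (which, being the union of a chain, is the submodule `⨆ i, F i`)
is a 2-absorbing submodule of `M`. -/
theorem union_chain_isTwoAbsorbing {R M ι : Type*} [CommRing R] [AddCommGroup M] [Module R M]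
    [Module.Finite R M] [Nonempty ι] (F : ι → Submodule R M)
    (hchain : ∀ i j : ι, F i ≤ F j ∨ F j ≤ F i)
    (habs : ∀ i : ι, IsTwoAbsorbing (F i)) :
    ((⨆ i, F i : Submodule R M) : Set M) = ⋃ i, (F i : Set M) ∧
      IsTwoAbsorbing (⨆ i, F i) := by
  have hdir : Directed (· ≤ ·) F := fun i j => by
    rcases hchain i j with h | h
    · exact ⟨j, h, le_rfl⟩
    · exact ⟨i, le_rfl, h⟩
  have hcoe : ((⨆ i, F i : Submodule R M) : Set M) = ⋃ i, (F i : Set M) :=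
    Submodule.coe_iSup_of_directed F hdir
  refine ⟨hcoe, ?_, ?_⟩
  · -- properness
    intro htop
    have hcompact : IsCompactElement (⊤ : Submodule R M) :=
      (Submodule.fg_iff_compact _).mp Module.Finite.fg_top
    have : ∃ i, (⊤ : Submodule R M) ≤ F i := by
      have h := (CompleteLattice.isCompactElement_iff_le_of_directed_sSup_le
          (α := Submodule R M) ⊤).mp hcompact (Set.range F) (Set.range_nonempty F)
          hdir.directedOn_range (by rw [← iSup, htop])
      obtain ⟨x, ⟨i, rfl⟩, hx⟩ := h
      exact ⟨i, hx⟩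
    obtain ⟨i, hi⟩ := this
    exact (habs i).1 (top_le_iff.mp hi)
  · intro a b m hm
    have : a • b • m ∈ ⋃ i, (F i : Set M) := hcoe ▸ hm
    obtain ⟨_, ⟨i, rfl⟩, hmi⟩ := this
    rcases (habs i).2 a b m hmi with h | h | h
    · exact Or.inl (Submodule.colon_mono (le_iSup F i) le_rfl h)
    · exact Or.inr (Or.inl (le_iSup F i h))
    · exact Or.inr (Or.inr (le_iSup F i h))
end

section
/- Let S be a multiplicatively closed subset of R, M an R-module, and F a submodule of M such that Z(M/F) ∩ S = ∅, where Z(M/F) = {r ∈ R : r·x = 0 for some nonzero x ∈ M/F}. If S⁻¹F is a 2-absorbing submodule of S⁻¹M, then F is a 2-absorbing submodule of M. -/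
/-- If `Z(M/F) ∩ S = ∅` and `S⁻¹F` is a 2-absorbing submodule of `S⁻¹M`, then `F` is a
2-absorbing submodule of `M`. -/
theorem isTwoAbsorbing_of_localized {R M : Type*} [CommRing R] [AddCommGroup M] [Module R M]
    (S : Submonoid R) (F : Submodule R M)
    (hZ : ∀ s ∈ S, ¬ ∃ x : M ⧸ F, x ≠ 0 ∧ s • x = 0)
    (h : IsTwoAbsorbing (F.localized S)) :
    IsTwoAbsorbing F := by
  set f := LocalizedModule.mkLinearMap S M with hf
  -- Z(M/F) ∩ S = ∅ means: s • z ∈ F with s ∈ S implies z ∈ F.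
  have hF : ∀ s : R, s ∈ S → ∀ z : M, s • z ∈ F → z ∈ F := by
    intro s hs z hsz
    by_contra hz
    exact hZ s hs ⟨Submodule.Quotient.mk z,
      by simpa [Submodule.Quotient.mk_eq_zero] using hz,
      by rw [← Submodule.Quotient.mk_smul]; exact (Submodule.Quotient.mk_eq_zero _).mpr hsz⟩
  -- membership of f z in the localized submodule pulls back to membership in F
  have hmem : ∀ z : M, f z ∈ F.localized S → z ∈ F := by
    intro z hzmem
    obtain ⟨n, hn, s, hns⟩ := (Submodule.mem_localized' _ _ _ _ _).mp hzmem
    rw [← IsLocalizedModule.mk'_one S f z, IsLocalizedModule.mk'_eq_mk'_iff] at hns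
    obtain ⟨t, ht⟩ := hns
    have : ((t : R) * (s : R)) • z ∈ F := by
      rw [mul_smul]
      rw [Submonoid.smul_def, Submonoid.smul_def, one_smul] at ht
      rw [ht]
      exact F.smul_mem _ hn
    exact hF _ (S.mul_mem t.2 s.2) z this
  constructor
  · intro htop
    apply h.1
    rw [htop]
    exact Submodule.localized'_top _ _ _
  · intro a b m habm
    have hmk : (algebraMap R (Localization S) a) • (algebraMap R (Localization S) b) • f m
        ∈ F.localized S := by
      rw [algebraMap_smul, algebraMap_smul, ← map_smul, ← map_smul]
      exact ⟨a • b • m, habm, 1, IsLocalizedModule.mk'_one S f _⟩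
    rcases h.2 _ _ _ hmk with hc | hc | hc
    · left
      rw [Submodule.mem_colon]
      intro p _
      rw [Submodule.mem_colon] at hc
      have := hc (f p) trivial
      rw [← map_mul, algebraMap_smul, ← map_smul] at this
      exact hmem _ this
    · right; left
      rw [algebraMap_smul, ← map_smul] at hc
      exact hmem _ hc
    · right; right
      rw [algebraMap_smul, ← map_smul] at hc
      exact hmem _ hc
end

section
/- Let R be a commutative ring and M an R-module. An ideal I of R is a 2-absorbing ideal of R if and only if the ideal I(+)M is a 2-absorbing ideal of the trivial extension R(+)M. -/
/-- A proper ideal `I` of a commutative ring `A` is 2-absorbing if whenever `a*b*c ∈ I`,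
then `a*b ∈ I` or `a*c ∈ I` or `b*c ∈ I`. -/
def IsTwoAbsorbingIdeal {A : Type*} [CommRing A] (I : Ideal A) : Prop :=
  I ≠ ⊤ ∧ ∀ a b c : A, a * b * c ∈ I → a * b ∈ I ∨ a * c ∈ I ∨ b * c ∈ I

/-- `I` is a 2-absorbing ideal of `R` iff `I(+)M` is a 2-absorbing ideal of the trivial
extension `R(+)M`.  Here `I(+)M = {(i, m) : i ∈ I, m ∈ M}` is realized as the comap of `I`
along the projection `R(+)M → R`. -/
theorem isTwoAbsorbingIdeal_idealization_iff {R M : Type*} [CommRing R] [AddCommGroup M]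
    [Module R M] [Module Rᵐᵒᵖ M] [IsCentralScalar R M] (I : Ideal R) :
    IsTwoAbsorbingIdeal I ↔
      IsTwoAbsorbingIdeal (I.comap (TrivSqZeroExt.fstHom R R M).toRingHom) := by
  have hmem : ∀ x : TrivSqZeroExt R M,
      x ∈ I.comap (TrivSqZeroExt.fstHom R R M).toRingHom ↔ x.fst ∈ I := fun x => Iff.rfl
  constructor
  · rintro ⟨hne, h⟩
    constructor
    · intro htop
      apply hne
      rw [Ideal.eq_top_iff_one] at htop ⊢
      simpa using (hmem 1).mp htop
    · intro a b c habc
      simp only [hmem, TrivSqZeroExt.fst_mul] at habc ⊢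
      exact h _ _ _ habc
  · rintro ⟨hne, h⟩
    constructor
    · intro htop
      apply hne
      rw [Ideal.eq_top_iff_one] at htop ⊢
      rw [hmem]
      simpa using htop
    · intro a b c habc
      have := h (TrivSqZeroExt.inl a) (TrivSqZeroExt.inl b) (TrivSqZeroExt.inl c)
        (by simpa [hmem] using habc)
      simpa [hmem] using this
end

section
/- Let R be a commutative ring, M an R-module, I an ideal of R, and F a proper submodule of M with IM ⊆ F. If I(+)F is a 2-absorbing ideal of the trivial extension R(+)M, then I is a 2-absorbing ideal of R. -/
/-- Let `I` be an ideal of `R` and `F` a proper submodule of `M` with `IM ⊆ F`.  If the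
ideal `I(+)F = {(i, n) : i ∈ I, n ∈ F}` of the trivial extension `R(+)M` is 2-absorbing,
then `I` is a 2-absorbing ideal of `R`. -/
theorem isTwoAbsorbingIdeal_of_idealization {R M : Type*} [CommRing R] [AddCommGroup M]
    [Module R M] [Module Rᵐᵒᵖ M] [IsCentralScalar R M] (I : Ideal R) (F : Submodule R M)
    (hFproper : F ≠ ⊤) (hIM : ∀ i ∈ I, ∀ m : M, i • m ∈ F)
    (K : Ideal (TrivSqZeroExt R M))
    (hK : ∀ x : TrivSqZeroExt R M, x ∈ K ↔ x.fst ∈ I ∧ x.snd ∈ F)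
    (h : IsTwoAbsorbingIdeal K) :
    IsTwoAbsorbingIdeal I := by
  constructor
  · intro hI
    apply hFproper
    rw [Submodule.eq_top_iff']
    intro m
    simpa using hIM 1 (hI ▸ Submodule.mem_top) m
  · intro a b c habc
    have hmem : ∀ r : R, r ∈ I → (TrivSqZeroExt.inl r : TrivSqZeroExt R M) ∈ K := by
      intro r hr
      rw [hK]
      exact ⟨hr, F.zero_mem⟩
    have := h.2 (TrivSqZeroExt.inl a) (TrivSqZeroExt.inl b) (TrivSqZeroExt.inl c) (by
      rw [← TrivSqZeroExt.inl_mul, ← TrivSqZeroExt.inl_mul]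
      exact hmem _ habc)
    have fst_of : ∀ x y : R, (TrivSqZeroExt.inl x * TrivSqZeroExt.inl y : TrivSqZeroExt R M) ∈ K → x * y ∈ I := by
      intro x y hx
      rw [← TrivSqZeroExt.inl_mul, hK] at hx
      simpa using hx.1
    rcases this with hx | hx | hx
    · exact Or.inl (fst_of _ _ hx)
    · exact Or.inr (Or.inl (fst_of _ _ hx))
    · exact Or.inr (Or.inr (fst_of _ _ hx))
end

section
/- Let φ₁ : M → N be a surjective module homomorphism (over a ring homomorphism or the same ring R) and F a submodule of M containing ker(φ₁). If F is a 2-absorbing submodule of M, then φ₁(F) is a 2-absorbing submodule of N. -/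
/-- If `φ₁ : M → N` is a surjective `R`-module homomorphism and `F` is a 2-absorbing
submodule of `M` containing `ker φ₁`, then `φ₁(F)` is a 2-absorbing submodule of `N`. -/
theorem map_isTwoAbsorbing {R M N : Type*} [CommRing R] [AddCommGroup M] [Module R M]
    [AddCommGroup N] [Module R N] (φ₁ : M →ₗ[R] N) (hsurj : Function.Surjective φ₁)
    (F : Submodule R M) (hker : LinearMap.ker φ₁ ≤ F) (hF : IsTwoAbsorbing F) :
    IsTwoAbsorbing (F.map φ₁) := by
  obtain ⟨hne, habs⟩ := hF
  constructor
  · intro h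
    apply hne
    rw [eq_top_iff]
    intro m _
    have : φ₁ m ∈ F.map φ₁ := h ▸ Submodule.mem_top
    obtain ⟨f, hf, hfm⟩ := this
    have : m - f ∈ LinearMap.ker φ₁ := by
      simp [LinearMap.mem_ker, hfm]
    have := hker this
    have : m - f + f ∈ F := F.add_mem this hf
    simpa using this
  · intro a b n hn
    obtain ⟨m, rfl⟩ := hsurj n
    obtain ⟨f, hf, hfm⟩ := hn
    have hm : a • b • m ∈ F := by
      have hk : a • b • m - f ∈ LinearMap.ker φ₁ := by
        simp [LinearMap.mem_ker, hfm, sub_eq_zero]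
      have := F.add_mem (hker hk) hf
      simpa using this
    rcases habs a b m hm with h | h | h
    · left
      rw [Submodule.mem_colon] at h ⊢
      intro p _
      obtain ⟨q, rfl⟩ := hsurj p
      exact ⟨(a * b) • q, h q trivial, by simp⟩
    · right; left
      exact ⟨a • m, h, by simp⟩
    · right; right
      exact ⟨b • m, h, by simp⟩
end

section
/- Let K ⊆ F be submodules of an R-module M. Then F is a 2-absorbing submodule of M if and only if F/K is a 2-absorbing submodule of M/K. -/
/-- For submodules `K ⊆ F` of `M`, `F` is a 2-absorbing submodule of `M` iff `F/K` is a
2-absorbing submodule of `M/K`. -/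
theorem isTwoAbsorbing_quotient_iff {R M : Type*} [CommRing R] [AddCommGroup M] [Module R M]
    (K F : Submodule R M) (hKF : K ≤ F) :
    IsTwoAbsorbing F ↔ IsTwoAbsorbing (F.map K.mkQ) := by
  have hmem : ∀ x : M, K.mkQ x ∈ F.map K.mkQ ↔ x ∈ F := by
    intro x
    constructor
    · rintro ⟨y, hy, he⟩
      have hk : y - x ∈ K := (Submodule.Quotient.eq K).mp he
      rw [← sub_sub_cancel y x]
      exact F.sub_mem hy (hKF hk)
    · intro hx; exact ⟨x, hx, rfl⟩
  have hsurj := K.mkQ_surjective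
  have hcolon : ∀ r : R, r ∈ (F.map K.mkQ).colon ⊤ ↔ r ∈ F.colon ⊤ := by
    intro r
    simp only [Submodule.mem_colon]
    constructor
    · intro h x _
      have := h (K.mkQ x) trivial
      rwa [← map_smul, hmem] at this
    · intro h y _
      obtain ⟨x, rfl⟩ := hsurj y
      rw [← map_smul, hmem]
      exact h x trivial
  have htop : F.map K.mkQ = ⊤ ↔ F = ⊤ := by
    constructor
    · intro h
      rw [eq_top_iff]
      intro x _
      rw [← hmem x, h]; trivial
    · rintro rfl
      rw [eq_top_iff]
      rintro y -
      obtain ⟨x, rfl⟩ := hsurj y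
      exact (hmem x).2 trivial
  constructor
  · rintro ⟨hne, habs⟩
    refine ⟨fun h => hne (htop.1 h), ?_⟩
    intro a b y hy
    obtain ⟨m, rfl⟩ := hsurj y
    rw [← map_smul, ← map_smul, hmem] at hy
    rcases habs a b m hy with h | h | h
    · exact Or.inl ((hcolon _).2 h)
    · exact Or.inr (Or.inl (by rw [← map_smul, hmem]; exact h))
    · exact Or.inr (Or.inr (by rw [← map_smul, hmem]; exact h))
  · rintro ⟨hne, habs⟩
    refine ⟨fun h => hne (htop.2 h), ?_⟩
    intro a b m hm
    have : a • b • K.mkQ m ∈ F.map K.mkQ := by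
      rw [← map_smul, ← map_smul, hmem]; exact hm
    rcases habs a b (K.mkQ m) this with h | h | h
    · exact Or.inl ((hcolon _).1 h)
    · exact Or.inr (Or.inl (by rwa [← map_smul, hmem] at h))
    · exact Or.inr (Or.inr (by rwa [← map_smul, hmem] at h))
end

section
/- With the amalgamation notation, F ⋈^φ JN is a 2-absorbing submodule of the (R₁ ⋈^f J)-module M ⋈^φ JN if and only if F is a 2-absorbing submodule of the R₁-module M. -/
set_option synthInstance.maxHeartbeats 1000000
set_option maxHeartbeats 1000000
/-- `M` as a module over `R₁ × R₂` via the first projection. -/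
noncomputable instance moduleProdFst {R₁ R₂ M : Type*} [CommRing R₁] [CommRing R₂]
    [AddCommGroup M] [Module R₁ M] : Module (R₁ × R₂) M :=
  Module.compHom M (RingHom.fst R₁ R₂)

/-- `N` as a module over `R₁ × R₂` via the second projection. -/
noncomputable instance moduleProdSnd {R₁ R₂ N : Type*} [CommRing R₁] [CommRing R₂]
    [AddCommGroup N] [Module R₂ N] : Module (R₁ × R₂) N :=
  Module.compHom N (RingHom.snd R₁ R₂)

/-- The amalgamation `R₁ ⋈^f J = {(r, f r + j) : r ∈ R₁, j ∈ J}` of `R₁` and `R₂` along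
the ideal `J` with respect to `f`, as a subring of `R₁ × R₂`. -/
def amalgRing {R₁ R₂ : Type*} [CommRing R₁] [CommRing R₂] (f : R₁ →+* R₂)
    (J : Ideal R₂) : Subring (R₁ × R₂) where
  carrier := {p | p.2 - f p.1 ∈ J}
  add_mem' {p q} hp hq := by
    have h : (p + q).2 - f (p + q).1 = (p.2 - f p.1) + (q.2 - f q.1) := by
      simp only [Prod.fst_add, Prod.snd_add, map_add]; ring
    rw [Set.mem_setOf_eq, h]
    exact J.add_mem hp hq
  zero_mem' := by simp
  neg_mem' {p} hp := by
    have h : (-p).2 - f (-p).1 = -(p.2 - f p.1) := by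
      simp only [Prod.fst_neg, Prod.snd_neg, map_neg]; ring
    rw [Set.mem_setOf_eq, h]
    exact J.neg_mem hp
  one_mem' := by simp
  mul_mem' {p q} hp hq := by
    have h : (p * q).2 - f (p * q).1 = p.2 * (q.2 - f q.1) + (p.2 - f p.1) * f q.1 := by
      simp only [Prod.fst_mul, Prod.snd_mul, map_mul]; ring
    rw [Set.mem_setOf_eq, h]
    exact J.add_mem (J.mul_mem_left p.2 hq) (J.mul_mem_right (f q.1) hp)

/-- The amalgamation `M ⋈^φ JN = {(m, φ m + n) : m ∈ M, n ∈ JN}` of `M` and `N` along `J`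
with respect to `φ`, as an `(R₁ ⋈^f J)`-submodule of `M × N`. -/
def amalgMod {R₁ R₂ M N : Type*} [CommRing R₁] [CommRing R₂] [AddCommGroup M] [Module R₁ M]
    [AddCommGroup N] [Module R₂ N] (f : R₁ →+* R₂) (J : Ideal R₂) (φ : M →+ N)
    (hφ : ∀ (r : R₁) (m : M), φ (r • m) = f r • φ m) :
    Submodule (amalgRing f J) (M × N) where
  carrier := {p | p.2 - φ p.1 ∈ J • (⊤ : Submodule R₂ N)}
  add_mem' {p q} hp hq := by
    have h : (p + q).2 - φ (p + q).1 = (p.2 - φ p.1) + (q.2 - φ q.1) := by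
      simp only [Prod.fst_add, Prod.snd_add, map_add]; abel
    rw [Set.mem_setOf_eq, h]
    exact Submodule.add_mem _ hp hq
  zero_mem' := by simp
  smul_mem' a p hp := by
    have key : (a • p : M × N).2 - φ (a • p : M × N).1 =
        (a : R₁ × R₂).2 • (p.2 - φ p.1) +
          ((a : R₁ × R₂).2 - f (a : R₁ × R₂).1) • φ p.1 := by
      show (a : R₁ × R₂).2 • p.2 - φ ((a : R₁ × R₂).1 • p.1) = _
      rw [hφ]
      module
    rw [Set.mem_setOf_eq, key]
    exact Submodule.add_mem _ (Submodule.smul_mem _ _ hp)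
      (Submodule.smul_mem_smul a.2 trivial)

/-- For a submodule `F` of `M`, the amalgamation
`F ⋈^φ JN = {(m, φ m + n) : m ∈ F, n ∈ JN}` as an `(R₁ ⋈^f J)`-submodule of `M ⋈^φ JN`. -/
def amalgSub {R₁ R₂ M N : Type*} [CommRing R₁] [CommRing R₂] [AddCommGroup M] [Module R₁ M]
    [AddCommGroup N] [Module R₂ N] (f : R₁ →+* R₂) (J : Ideal R₂) (φ : M →+ N)
    (hφ : ∀ (r : R₁) (m : M), φ (r • m) = f r • φ m) (F : Submodule R₁ M) :
    Submodule (amalgRing f J) (amalgMod f J φ hφ) where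
  carrier := {p | (p : M × N).1 ∈ F}
  add_mem' {p q} hp hq := F.add_mem hp hq
  zero_mem' := F.zero_mem
  smul_mem' a p hp := F.smul_mem (a : R₁ × R₂).1 hp

section Work
variable {R₁ R₂ M N : Type*} [CommRing R₁] [CommRing R₂]
    [AddCommGroup M] [Module R₁ M] [AddCommGroup N] [Module R₂ N] (f : R₁ →+* R₂)
    (J : Ideal R₂) (φ : M →+ N) (hφ : ∀ (r : R₁) (m : M), φ (r • m) = f r • φ m)
    (F : Submodule R₁ M)

lemma mem_amalgSub_iff (p : amalgMod f J φ hφ) :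
    p ∈ amalgSub f J φ hφ F ↔ (p : M × N).1 ∈ F := Iff.rfl

lemma amalg_smul_fst (a : amalgRing f J) (p : amalgMod f J φ hφ) :
    ((a • p : amalgMod f J φ hφ) : M × N).1 = (a : R₁ × R₂).1 • (p : M × N).1 := rfl

/-- lift of a ring element -/
def liftR (a : R₁) : amalgRing f J := ⟨(a, f a), show f a - f a ∈ J by simp⟩

/-- lift of a module element -/
def liftMod (m : M) : amalgMod f J φ hφ := ⟨(m, φ m), show φ m - φ m ∈ J • (⊤ : Submodule R₂ N) by simp⟩

end Work

theorem amalgSub_isTwoAbsorbing_iff' {R₁ R₂ M N : Type*} [CommRing R₁] [CommRing R₂]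
    [AddCommGroup M] [Module R₁ M] [AddCommGroup N] [Module R₂ N] (f : R₁ →+* R₂)
    (J : Ideal R₂) (φ : M →+ N) (hφ : ∀ (r : R₁) (m : M), φ (r • m) = f r • φ m)
    (F : Submodule R₁ M) :
    IsTwoAbsorbing (amalgSub f J φ hφ F) ↔ IsTwoAbsorbing F := by
  constructor
  · rintro ⟨hne, h⟩
    refine ⟨?_, ?_⟩
    · intro hF
      apply hne
      rw [Submodule.eq_top_iff'] at hF ⊢
      intro p
      exact hF _
    · intro a b m habm
      have key : (liftR f J a) • (liftR f J b) • (liftMod f J φ hφ m) ∈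
          amalgSub f J φ hφ F := by
        rw [mem_amalgSub_iff, amalg_smul_fst, amalg_smul_fst]
        exact habm
      rcases h _ _ _ key with h1 | h2 | h3
      · left
        rw [Submodule.mem_colon] at h1 ⊢
        intro m' _
        have := h1 (liftMod f J φ hφ m') trivial
        rw [mem_amalgSub_iff, amalg_smul_fst] at this
        exact this
      · right; left
        rw [mem_amalgSub_iff, amalg_smul_fst] at h2
        exact h2
      · right; right
        rw [mem_amalgSub_iff, amalg_smul_fst] at h3
        exact h3
  · rintro ⟨hne, h⟩
    refine ⟨?_, ?_⟩
    · intro hF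
      apply hne
      rw [Submodule.eq_top_iff'] at hF ⊢
      intro m
      exact hF (liftMod f J φ hφ m)
    · intro a b p habp
      rw [mem_amalgSub_iff, amalg_smul_fst, amalg_smul_fst] at habp
      rcases h _ _ _ habp with h1 | h2 | h3
      · left
        rw [Submodule.mem_colon] at h1 ⊢
        intro q _
        rw [mem_amalgSub_iff, amalg_smul_fst]
        exact h1 _ trivial
      · right; left
        rw [mem_amalgSub_iff, amalg_smul_fst]
        exact h2
      · right; right
        rw [mem_amalgSub_iff, amalg_smul_fst]
        exact h3
/-- `F ⋈^φ JN` is a 2-absorbing submodule of the `(R₁ ⋈^f J)`-module `M ⋈^φ JN` if and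
only if `F` is a 2-absorbing submodule of the `R₁`-module `M`. -/
theorem amalgSub_isTwoAbsorbing_iff {R₁ R₂ M N : Type*} [CommRing R₁] [CommRing R₂]
    [AddCommGroup M] [Module R₁ M] [AddCommGroup N] [Module R₂ N] (f : R₁ →+* R₂)
    (J : Ideal R₂) (φ : M →+ N) (hφ : ∀ (r : R₁) (m : M), φ (r • m) = f r • φ m)
    (F : Submodule R₁ M) :
    IsTwoAbsorbing (amalgSub f J φ hφ F) ↔ IsTwoAbsorbing F := by
  exact amalgSub_isTwoAbsorbing_iff' f J φ hφ F
end

section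
/- With the amalgamation notation, the submodule ∼N₂^φ = {(m, φ(m)+n) ∈ M ⋈^φ JN : φ(m)+n ∈ N₂} is a 2-absorbing submodule of M ⋈^φ JN if and only if N₂ is a 2-absorbing submodule of the (f(R₁)+J)-module φ(M)+JN. -/
set_option synthInstance.maxHeartbeats 1000000
set_option maxHeartbeats 1000000
/-- The subring `f(R₁) + J` of `R₂`. -/
def rangeAddIdeal {R₁ R₂ : Type*} [CommRing R₁] [CommRing R₂] (f : R₁ →+* R₂)
    (J : Ideal R₂) : Subring R₂ where
  carrier := {s | ∃ r : R₁, s - f r ∈ J}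
  add_mem' {s t} hs ht := by
    obtain ⟨r, hr⟩ := hs
    obtain ⟨r', hr'⟩ := ht
    refine ⟨r + r', ?_⟩
    have h : s + t - f (r + r') = (s - f r) + (t - f r') := by rw [map_add]; ring
    rw [h]; exact J.add_mem hr hr'
  zero_mem' := ⟨0, by simp⟩
  neg_mem' {s} hs := by
    obtain ⟨r, hr⟩ := hs
    refine ⟨-r, ?_⟩
    have h : -s - f (-r) = -(s - f r) := by rw [map_neg]; ring
    rw [h]; exact J.neg_mem hr
  one_mem' := ⟨1, by simp⟩
  mul_mem' {s t} hs ht := by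
    obtain ⟨r, hr⟩ := hs
    obtain ⟨r', hr'⟩ := ht
    refine ⟨r * r', ?_⟩
    have h : s * t - f (r * r') = s * (t - f r') + (s - f r) * f r' := by
      rw [map_mul]; ring
    rw [h]; exact J.add_mem (J.mul_mem_left s hr') (J.mul_mem_right (f r') hr)

/-- The `(f(R₁) + J)`-submodule `φ(M) + JN` of `N`. -/
def imageAddIdealSmul {R₁ R₂ M N : Type*} [CommRing R₁] [CommRing R₂] [AddCommGroup M]
    [Module R₁ M] [AddCommGroup N] [Module R₂ N] (f : R₁ →+* R₂) (J : Ideal R₂)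
    (φ : M →+ N) (hφ : ∀ (r : R₁) (m : M), φ (r • m) = f r • φ m) :
    Submodule (rangeAddIdeal f J) N where
  carrier := {y | ∃ m : M, y - φ m ∈ J • (⊤ : Submodule R₂ N)}
  add_mem' {y z} hy hz := by
    obtain ⟨m, hm⟩ := hy
    obtain ⟨m', hm'⟩ := hz
    refine ⟨m + m', ?_⟩
    have h : y + z - φ (m + m') = (y - φ m) + (z - φ m') := by rw [map_add]; abel
    rw [h]; exact Submodule.add_mem _ hm hm'
  zero_mem' := ⟨0, by simp⟩
  smul_mem' b y hy := by
    obtain ⟨m, hm⟩ := hy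
    obtain ⟨r, hr⟩ : ∃ r : R₁, (b : R₂) - f r ∈ J := b.2
    refine ⟨r • m, ?_⟩
    have h : (b • y : N) - φ (r • m) =
        (b : R₂) • (y - φ m) + ((b : R₂) - f r) • φ m := by
      show (b : R₂) • y - φ (r • m) = _
      rw [hφ]
      module
    rw [h]
    exact Submodule.add_mem _ (Submodule.smul_mem _ _ hm)
      (Submodule.smul_mem_smul hr trivial)

/-- The submodule `∼N₂^φ = {(m, φ m + n) ∈ M ⋈^φ JN : φ m + n ∈ N₂}` of `M ⋈^φ JN`. -/
def tildeSub {R₁ R₂ M N : Type*} [CommRing R₁] [CommRing R₂] [AddCommGroup M]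
    [Module R₁ M] [AddCommGroup N] [Module R₂ N] (f : R₁ →+* R₂) (J : Ideal R₂)
    (φ : M →+ N) (hφ : ∀ (r : R₁) (m : M), φ (r • m) = f r • φ m)
    (N₂ : Submodule (rangeAddIdeal f J) (imageAddIdealSmul f J φ hφ)) :
    Submodule (amalgRing f J) (amalgMod f J φ hφ) where
  carrier := {p | (⟨(p : M × N).2, (p : M × N).1, p.2⟩ : imageAddIdealSmul f J φ hφ) ∈ N₂}
  add_mem' {p q} hp hq := N₂.add_mem hp hq
  zero_mem' := N₂.zero_mem
  smul_mem' a p hp := N₂.smul_mem (⟨(a : R₁ × R₂).2, (a : R₁ × R₂).1, a.2⟩ :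
    rangeAddIdeal f J) hp

/-- `∼N₂^φ` is a 2-absorbing submodule of `M ⋈^φ JN` if and only if `N₂` is a 2-absorbing
submodule of the `(f(R₁) + J)`-module `φ(M) + JN`. -/
theorem tildeSub_isTwoAbsorbing_iff {R₁ R₂ M N : Type*} [CommRing R₁] [CommRing R₂]
    [AddCommGroup M] [Module R₁ M] [AddCommGroup N] [Module R₂ N] (f : R₁ →+* R₂)
    (J : Ideal R₂) (φ : M →+ N) (hφ : ∀ (r : R₁) (m : M), φ (r • m) = f r • φ m)
    (N₂ : Submodule (rangeAddIdeal f J) (imageAddIdealSmul f J φ hφ)) :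
    IsTwoAbsorbing (tildeSub f J φ hφ N₂) ↔ IsTwoAbsorbing N₂ := by
  have hval : ∀ (y₁ y₂ : imageAddIdealSmul f J φ hφ), (y₁ : N) = (y₂ : N) →
      (y₁ ∈ N₂ ↔ y₂ ∈ N₂) := fun y₁ y₂ h => by rw [Subtype.ext h]
  have memTilde : ∀ (x : amalgMod f J φ hφ),
      x ∈ tildeSub f J φ hφ N₂ ↔
        (⟨(x : M × N).2, (x : M × N).1, x.2⟩ : imageAddIdealSmul f J φ hφ) ∈ N₂ :=
    fun _ => Iff.rfl
  constructor
  · rintro ⟨hne, habs⟩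
    refine ⟨?_, ?_⟩
    · intro htop
      apply hne
      rw [Submodule.eq_top_iff']
      intro x
      rw [memTilde, htop]
      trivial
    · intro a b y hy
      obtain ⟨r, hr⟩ := a.2
      obtain ⟨r', hr'⟩ := b.2
      obtain ⟨m, hm⟩ := y.2
      let A : amalgRing f J := ⟨(r, (a : R₂)), hr⟩
      let B : amalgRing f J := ⟨(r', (b : R₂)), hr'⟩
      let X : amalgMod f J φ hφ := ⟨(m, (y : N)), hm⟩
      have hX : A • B • X ∈ tildeSub f J φ hφ N₂ := by
        exact (hval _ (a • b • y) rfl).mpr hy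
      rcases habs A B X hX with h | h | h
      · left
        rw [Submodule.mem_colon]
        intro z _
        obtain ⟨m', hm'⟩ := z.2
        let Z : amalgMod f J φ hφ := ⟨(m', (z : N)), hm'⟩
        have hZ : (A * B) • Z ∈ tildeSub f J φ hφ N₂ :=
          Submodule.mem_colon.mp h Z trivial
        exact (hval _ ((a * b) • z) rfl).mp hZ
      · right; left
        exact (hval _ (a • y) rfl).mp h
      · right; right
        exact (hval _ (b • y) rfl).mp h
  · rintro ⟨hne, habs⟩
    refine ⟨?_, ?_⟩
    · intro htop
      apply hne
      rw [Submodule.eq_top_iff']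
      intro z
      obtain ⟨m', hm'⟩ := z.2
      let Z : amalgMod f J φ hφ := ⟨(m', (z : N)), hm'⟩
      have hZ : Z ∈ tildeSub f J φ hφ N₂ := by rw [htop]; trivial
      exact (hval _ z rfl).mp hZ
    · intro A B X hX
      let a : rangeAddIdeal f J := ⟨(A : R₁ × R₂).2, (A : R₁ × R₂).1, A.2⟩
      let b : rangeAddIdeal f J := ⟨(B : R₁ × R₂).2, (B : R₁ × R₂).1, B.2⟩
      let y : imageAddIdealSmul f J φ hφ := ⟨(X : M × N).2, (X : M × N).1, X.2⟩
      have hy : a • b • y ∈ N₂ := by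
        exact (hval _ _ rfl).mp hX
      rcases habs a b y hy with h | h | h
      · left
        rw [Submodule.mem_colon]
        intro Z _
        have hz : (a * b) • (⟨(Z : M × N).2, (Z : M × N).1, Z.2⟩ :
            imageAddIdealSmul f J φ hφ) ∈ N₂ :=
          Submodule.mem_colon.mp h _ trivial
        exact (hval _ _ rfl).mpr hz
      · right; left
        exact (hval _ (a • y) rfl).mpr h
      · right; right
        exact (hval _ (b • y) rfl).mpr h
end

section
/- If F = P₁ ∩ P₂ is the intersection of two distinct prime submodules of M, then F ⋈^φ JN is a 2-absorbing submodule of M ⋈^φ JN. -/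
set_option synthInstance.maxHeartbeats 1000000
set_option maxHeartbeats 1000000

/-- A proper submodule `P` of `M` is prime if whenever `r • m ∈ P`, then `m ∈ P` or
`r ∈ (P :_R M)`. -/
def IsPrimeSubmodule {R M : Type*} [CommRing R] [AddCommGroup M] [Module R M]
    (P : Submodule R M) : Prop :=
  P ≠ ⊤ ∧ ∀ r : R, ∀ m : M, r • m ∈ P → m ∈ P ∨ r ∈ P.colon ⊤
lemma inf_primes_isTwoAbsorbing' {R M : Type*} [CommRing R] [AddCommGroup M] [Module R M]
    (P₁ P₂ : Submodule R M) (h₁ : IsPrimeSubmodule P₁) (h₂ : IsPrimeSubmodule P₂) :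
    IsTwoAbsorbing (P₁ ⊓ P₂) := by
  constructor
  · intro h
    exact h₁.1 (top_unique (by rw [← h]; exact inf_le_left))
  · intro a b m hm
    obtain ⟨hm1, hm2⟩ := hm
    have colim : ∀ (P : Submodule R M), IsPrimeSubmodule P → a • b • m ∈ P →
        a ∈ P.colon ⊤ ∨ b ∈ P.colon ⊤ ∨ (a • m ∈ P ∧ b • m ∈ P) := by
      intro P hP hmem
      rcases hP.2 a (b • m) hmem with h | h
      · -- b • m ∈ P
        rw [smul_comm] at hmem
        rcases hP.2 b (a • m) hmem with h' | h'
        · exact Or.inr (Or.inr ⟨h', h⟩)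
        · exact Or.inr (Or.inl h')
      · exact Or.inl h
    have key : ∀ (P : Submodule R M), a ∈ P.colon ⊤ ∨ b ∈ P.colon ⊤ →
        a * b ∈ P.colon ⊤ := by
      intro P h
      rcases h with h | h
      · exact Ideal.mul_mem_right _ _ h
      · exact Ideal.mul_mem_left _ _ h
    have smem : ∀ (P : Submodule R M) (r : R), r ∈ P.colon ⊤ → r • m ∈ P := by
      intro P r h
      exact Submodule.mem_colon.mp h m trivial
    have C1 := colim P₁ h₁ hm1
    have C2 := colim P₂ h₂ hm2
    have colmem : a * b ∈ P₁.colon ⊤ → a * b ∈ P₂.colon ⊤ →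
        a * b ∈ (P₁ ⊓ P₂).colon ⊤ := by
      intro h1 h2
      rw [Submodule.mem_colon]
      intro x hx
      exact ⟨Submodule.mem_colon.mp h1 x hx, Submodule.mem_colon.mp h2 x hx⟩
    rcases C1 with hc1 | hc1 | ⟨ha1, hb1⟩
    · rcases C2 with hc2 | hc2 | ⟨ha2, hb2⟩
      · exact Or.inl (colmem (key _ (Or.inl hc1)) (key _ (Or.inl hc2)))
      · exact Or.inl (colmem (key _ (Or.inl hc1)) (key _ (Or.inr hc2)))
      · exact Or.inr (Or.inl ⟨smem _ _ hc1, ha2⟩)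
    · rcases C2 with hc2 | hc2 | ⟨ha2, hb2⟩
      · exact Or.inl (colmem (key _ (Or.inr hc1)) (key _ (Or.inl hc2)))
      · exact Or.inl (colmem (key _ (Or.inr hc1)) (key _ (Or.inr hc2)))
      · exact Or.inr (Or.inr ⟨smem _ _ hc1, hb2⟩)
    · rcases C2 with hc2 | hc2 | ⟨ha2, hb2⟩
      · exact Or.inr (Or.inl ⟨ha1, smem _ _ hc2⟩)
      · exact Or.inr (Or.inr ⟨hb1, smem _ _ hc2⟩)
      · exact Or.inr (Or.inl ⟨ha1, ha2⟩)

/-- If `F = P₁ ⊓ P₂` is the intersection of two distinct prime submodules of `M`, then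
`F ⋈^φ JN` is a 2-absorbing submodule of the `(R₁ ⋈^f J)`-module `M ⋈^φ JN`. -/
theorem amalgSub_inf_primes_isTwoAbsorbing {R₁ R₂ M N : Type*} [CommRing R₁] [CommRing R₂]
    [AddCommGroup M] [Module R₁ M] [AddCommGroup N] [Module R₂ N] (f : R₁ →+* R₂)
    (J : Ideal R₂) (φ : M →+ N) (hφ : ∀ (r : R₁) (m : M), φ (r • m) = f r • φ m)
    (P₁ P₂ : Submodule R₁ M) (h₁ : IsPrimeSubmodule P₁) (h₂ : IsPrimeSubmodule P₂)
    (hne : P₁ ≠ P₂) :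
    IsTwoAbsorbing (amalgSub f J φ hφ (P₁ ⊓ P₂)) := by
  have hF := inf_primes_isTwoAbsorbing' P₁ P₂ h₁ h₂
  set F := P₁ ⊓ P₂ with hFdef
  have hmem : ∀ (p : amalgMod f J φ hφ), p ∈ amalgSub f J φ hφ F ↔ (p : M × N).1 ∈ F :=
    fun p => Iff.rfl
  have hsmul : ∀ (a : amalgRing f J) (p : amalgMod f J φ hφ),
      ((a • p : amalgMod f J φ hφ) : M × N).1 = (a : R₁ × R₂).1 • (p : M × N).1 :=
    fun a p => rfl
  have hlift : ∀ m : M, ((⟨(m, φ m), by simp [amalgMod]⟩ : amalgMod f J φ hφ) : M × N).1 = m :=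
    fun m => rfl
  constructor
  · intro htop
    apply hF.1
    rw [eq_top_iff]
    intro m _
    have : (⟨(m, φ m), by simp [amalgMod]⟩ : amalgMod f J φ hφ) ∈ amalgSub f J φ hφ F := by
      rw [htop]; trivial
    exact this
  · intro a b p hab
    rw [hmem, hsmul, hsmul] at hab
    rcases hF.2 (a : R₁ × R₂).1 (b : R₁ × R₂).1 (p : M × N).1 hab with h | h | h
    · left
      rw [Submodule.mem_colon]
      intro x _
      rw [hmem, hsmul]
      exact Submodule.mem_colon.mp h (x : M × N).1 trivial
    · exact Or.inr (Or.inl h)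
    · exact Or.inr (Or.inr h)
end

section
/- Let M be a cyclic R-module and F a submodule of M. If (F :_R M) is a 2-absorbing ideal of R, then F is a 2-absorbing submodule of M. -/
/-- If `M` is a cyclic `R`-module and `(F :_R M)` is a 2-absorbing ideal of `R`, then `F`
is a 2-absorbing submodule of `M`. -/
theorem isTwoAbsorbing_of_colon_cyclic {R M : Type*} [CommRing R] [AddCommGroup M]
    [Module R M] (hcyc : ∃ m₀ : M, Submodule.span R {m₀} = ⊤) (F : Submodule R M)
    (h : IsTwoAbsorbingIdeal (F.colon ⊤)) :
    IsTwoAbsorbing F := by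
  obtain ⟨m₀, hm₀⟩ := hcyc
  obtain ⟨hne, h2⟩ := h
  have key : ∀ r : R, r ∈ F.colon ⊤ ↔ r • m₀ ∈ F := by
    intro r
    constructor
    · intro hr
      exact Submodule.mem_colon.mp hr m₀ trivial
    · intro hr
      rw [Submodule.mem_colon]
      intro p _
      have hp : p ∈ Submodule.span R {m₀} := hm₀ ▸ Submodule.mem_top
      obtain ⟨c, rfl⟩ := Submodule.mem_span_singleton.mp hp
      rw [smul_comm]
      exact F.smul_mem c hr
  constructor
  · intro hF
    apply hne
    rw [eq_top_iff]
    intro r _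
    rw [key]
    exact hF ▸ Submodule.mem_top
  · intro a b m habm
    have hm : m ∈ Submodule.span R {m₀} := hm₀ ▸ Submodule.mem_top
    obtain ⟨c, rfl⟩ := Submodule.mem_span_singleton.mp hm
    have habc : a * b * c ∈ F.colon ⊤ := by
      rw [key]
      simpa [mul_smul] using habm
    rcases h2 a b c habc with h1 | h1 | h1
    · exact Or.inl h1
    · exact Or.inr (Or.inl (by rw [key, mul_smul] at h1; simpa [smul_smul] using h1))
    · exact Or.inr (Or.inr (by rw [key, mul_smul] at h1; simpa [smul_smul] using h1))
end
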